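/- arXiv:math/0501019 — 3 statements merged into one kernel-verified Lean document; each statement's English description precedes it below -/
import Mathlib

section
/- Each of the commutators [D₁, α̂], [D₁, β̂], [|D₂|, α̂], and [|D₂|, β̂], defined on the algebraic span of the basis vectors of H, extends to a bounded operator on H. -/
noncomputable section

open Real

/-- Validity of an index triple `(N, I, J)` encoding `n = N/2`, `i = I/2`, `j = J/2`, with
`n ∈ ½ℤ₊` and `i, j ∈ {-n, -n+1, …, n}` (so `|I| ≤ N`, `|J| ≤ N` and `I ≡ J ≡ N (mod 2)`). -/
abbrev validH (x : ℤ × ℤ × ℤ) : Prop :=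
  0 ≤ x.1 ∧ |x.2.1| ≤ x.1 ∧ |x.2.2| ≤ x.1 ∧
    (x.1 + x.2.1) % 2 = 0 ∧ (x.1 + x.2.2) % 2 = 0

abbrev IdxH : Type := {x : ℤ × ℤ × ℤ // validH x}

/-- The Hilbert space `H = L₂(h)` with orthonormal basis `e^(n)_{ij}`. -/
abbrev Hsp : Type := lp (fun _ : IdxH => ℂ) 2

/-- The basis vector `e^(n)_{ij}` of `H`, where `n = N/2`, `i = I/2`, `j = J/2`;
it is `0` if the indices are out of range. -/
def eH (N I J : ℤ) : Hsp :=
  if h : validH (N, I, J) then lp.single 2 (⟨(N, I, J), h⟩ : IdxH) (1 : ℂ) else 0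

/-- the coefficient `q^(2n+i+j+1)` (here `n = N/2`, `i = I/2`, `j = J/2`) -/
def aC1 (q : ℝ) (N I J : ℤ) : ℝ := q ^ ((N : ℝ) + ((I : ℝ) + (J : ℝ)) / 2 + 1)

/-- the coefficient `(1-q^(2n+2i))^(1/2) * (1-q^(2n+2j))^(1/2)` -/
def aC2 (q : ℝ) (N I J : ℤ) : ℝ :=
  Real.sqrt (1 - q ^ ((N : ℝ) + (I : ℝ))) * Real.sqrt (1 - q ^ ((N : ℝ) + (J : ℝ)))

/-- the coefficient `-q^(n+j) * (1-q^(2n+2i+2))^(1/2)` -/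
def bC1 (q : ℝ) (N I J : ℤ) : ℝ :=
  -(q ^ (((N : ℝ) + (J : ℝ)) / 2)) * Real.sqrt (1 - q ^ ((N : ℝ) + (I : ℝ) + 2))

/-- the coefficient `q^(n+i) * (1-q^(2n+2j))^(1/2)` -/
def bC2 (q : ℝ) (N I J : ℤ) : ℝ :=
  q ^ (((N : ℝ) + (I : ℝ)) / 2) * Real.sqrt (1 - q ^ ((N : ℝ) + (J : ℝ)))

/-- `A` acts on the basis vectors of `H` by the defining formula of `α̂`:
`α̂ e^(n)_{ij} = q^(2n+i+j+1) e^(n+1/2)_{i-1/2,j-1/2}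
  + (1-q^(2n+2i))^(1/2) (1-q^(2n+2j))^(1/2) e^(n-1/2)_{i-1/2,j-1/2}`. -/
def IsAlphaHat (q : ℝ) (A : Hsp →L[ℂ] Hsp) : Prop :=
  ∀ N I J : ℤ, validH (N, I, J) →
    A (eH N I J) = (aC1 q N I J : ℂ) • eH (N + 1) (I - 1) (J - 1)
      + (aC2 q N I J : ℂ) • eH (N - 1) (I - 1) (J - 1)

/-- `B` acts on the basis vectors of `H` by the defining formula of `β̂`:
`β̂ e^(n)_{ij} = -q^(n+j) (1-q^(2n+2i+2))^(1/2) e^(n+1/2)_{i+1/2,j-1/2}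
  + q^(n+i) (1-q^(2n+2j))^(1/2) e^(n-1/2)_{i+1/2,j-1/2}`. -/
def IsBetaHat (q : ℝ) (B : Hsp →L[ℂ] Hsp) : Prop :=
  ∀ N I J : ℤ, validH (N, I, J) →
    B (eH N I J) = (bC1 q N I J : ℂ) • eH (N + 1) (I + 1) (J - 1)
      + (bC2 q N I J : ℂ) • eH (N - 1) (I + 1) (J - 1)

/-- the eigenvalue of `D₁` on `e^(n)_{ij}`: `-2n` if `j ≠ n`, `2n+1` if `j = n`
(here `n = N/2`, `j = J/2`) -/
def lamD1 (N I J : ℤ) : ℝ := if J = N then (N : ℝ) + 1 else -(N : ℝ)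

/-- the eigenvalue of `|D₂|` on `e^(n)_{ij}`: `2n+1` -/
def lamD2 (N I J : ℤ) : ℝ := (N : ℝ) + 1

/-!
On the basis, each commutator is a sum of two weighted shifts of the indices,
`(n, i, j) ↦ (n ± ½, i - ½, j - ½)` for `α̂` and `(n ± ½, i + ½, j - ½)` for `β̂`, with
weight (jump of the eigenvalue) × (coefficient of `α̂` or `β̂`). A weighted shift along a
partial bijection of an orthonormal basis is bounded by the supremum of its weights, so it
suffices to bound the weights. All coefficients lie in `[-1, 1]`, and every eigenvalue jump is
`±1` except for `D₁` when `n` increases from `j = n`, where it is `-(4n + 2)`; there the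
coefficient is at most `q^(2n)`, and `(k + 1) q^k ≤ ∑_{i ≤ k} q^i ≤ (1 - q)⁻¹`.
-/

open scoped ENNReal

theorem Multiset.sum_map_filterMap {α β M : Type*} [AddCommMonoid M] (φ : β → Option α)
    (G : α → M) (m : Multiset β) :
    ((m.filterMap φ).map G).sum = (m.map fun y => (φ y).elim 0 G).sum := by
  induction m using Multiset.induction_on with
  | empty => simp
  | cons a m ih =>
    cases h : φ a <;> simp [Multiset.filterMap_cons_none, Multiset.filterMap_cons_some, h, ih]

theorem PEquiv.sum_elim_le_tsum {α β : Type*} (σ : α ≃. β) {F : α → ℝ} (hF : 0 ≤ F)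
    (hFs : Summable F) (s : Finset β) :
    ∑ y ∈ s, (σ.symm y).elim 0 F ≤ ∑' x, F x :=
  calc ∑ y ∈ s, (σ.symm y).elim 0 F
      = ∑ x ∈ s.filterMap σ.symm (fun _ _ _ => σ.symm.inj), F x :=
        (Multiset.sum_map_filterMap σ.symm F s.val).symm
    _ ≤ ∑' x, F x := hFs.sum_le_tsum _ fun x _ => hF x

namespace lp

variable {ι 𝕜 E : Type*} [NormedField 𝕜] [NormedAddCommGroup E] [NormedSpace 𝕜 E]
  {p : ℝ≥0∞} [Fact (1 ≤ p)]

def weightedShiftFun (σ : ι ≃. ι) (c : ι → 𝕜) (f : ι → E) (y : ι) : E :=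
  (σ.symm y).elim 0 fun x => c x • f x

theorem sum_norm_weightedShiftFun_rpow_le (hp : p ≠ ∞) (σ : ι ≃. ι)
    (c : lp (fun _ : ι => 𝕜) ∞) (f : lp (fun _ : ι => E) p) (s : Finset ι) :
    ∑ y ∈ s, ‖weightedShiftFun σ c f y‖ ^ p.toReal ≤ (‖c‖ * ‖f‖) ^ p.toReal := by
  have hp0 : 0 < p.toReal := ENNReal.toReal_pos (zero_lt_one.trans_le Fact.out).ne' hp
  have hpoint : ∀ y, ‖weightedShiftFun σ c f y‖ ^ p.toReal
      ≤ ‖c‖ ^ p.toReal * (σ.symm y).elim 0 fun x => ‖f x‖ ^ p.toReal := by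
    intro y
    rcases h : σ.symm y with _ | x
    · simp [weightedShiftFun, h, Real.zero_rpow hp0.ne']
    · rw [weightedShiftFun, h, Option.elim_some, Option.elim_some, norm_smul,
        ← Real.mul_rpow (norm_nonneg _) (norm_nonneg _)]
      gcongr
      exact norm_apply_le_norm ENNReal.top_ne_zero c x
  calc ∑ y ∈ s, ‖weightedShiftFun σ c f y‖ ^ p.toReal
      ≤ ‖c‖ ^ p.toReal * ∑ y ∈ s, (σ.symm y).elim 0 fun x => ‖f x‖ ^ p.toReal := by
        rw [Finset.mul_sum]; exact Finset.sum_le_sum fun y _ => hpoint y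
    _ ≤ ‖c‖ ^ p.toReal * ∑' x, ‖f x‖ ^ p.toReal := by
        gcongr
        exact σ.sum_elim_le_tsum (fun x => by positivity) ((lp.memℓp f).summable hp0) s
    _ = (‖c‖ * ‖f‖) ^ p.toReal := by
        rw [← norm_rpow_eq_tsum hp0, Real.mul_rpow (norm_nonneg _) (norm_nonneg _)]

def weightedShift (hp : p ≠ ∞) (σ : ι ≃. ι) (c : lp (fun _ : ι => 𝕜) ∞) :
    lp (fun _ : ι => E) p →L[𝕜] lp (fun _ : ι => E) p :=
  LinearMap.mkContinuous
    { toFun := fun f => ⟨weightedShiftFun σ c f,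
        memℓp_gen' (sum_norm_weightedShiftFun_rpow_le hp σ c f)⟩
      map_add' := fun f g => by
        ext y
        change weightedShiftFun σ c (f + g) y =
          weightedShiftFun σ c f y + weightedShiftFun σ c g y
        rcases h : σ.symm y with _ | x <;> simp [weightedShiftFun, h, smul_add]
      map_smul' := fun a f => by
        ext y
        rcases h : σ.symm y with _ | x <;> simp [weightedShiftFun, h, smul_comm a] }
    ‖c‖ fun f => norm_le_of_forall_sum_le
      (ENNReal.toReal_pos (zero_lt_one.trans_le Fact.out).ne' hp) (by positivity)
      (sum_norm_weightedShiftFun_rpow_le hp σ c f)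

theorem weightedShift_single [DecidableEq ι] (hp : p ≠ ∞) (σ : ι ≃. ι)
    (c : lp (fun _ : ι => 𝕜) ∞) (x : ι) (a : E) :
    weightedShift hp σ c (lp.single p x a) = (σ x).elim 0 fun y => lp.single p y (c x • a) := by
  ext y
  change weightedShiftFun σ c (lp.single p x a) y = _
  by_cases hyx : σ.symm y = some x
  · simp [weightedShiftFun, hyx, σ.eq_some_iff.1 hyx]
  · have hl : weightedShiftFun σ c (lp.single p x a) y = 0 := by
      rcases h : σ.symm y with _ | x'
      · simp [weightedShiftFun, h]
      · have : x' ≠ x := by rintro rfl; exact hyx h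
        simp [weightedShiftFun, h, Pi.single_eq_of_ne this]
    have hr : ((σ x).elim 0 fun y' => lp.single p y' (c x • a) : lp _ p) y = 0 := by
      rcases h : σ x with _ | y'
      · simp
      · have : y ≠ y' := by rintro rfl; exact hyx (σ.eq_some_iff.2 h)
        simp [Pi.single_eq_of_ne this]
    rw [hl, hr]

end lp

def Equiv.subtypePEquiv {α β : Type*} (e : α ≃ β) (p : α → Prop) (q : β → Prop)
    [DecidablePred p] [DecidablePred q] : {a // p a} ≃. {b // q b} where
  toFun a := if h : q (e a) then some ⟨e a, h⟩ else none
  invFun b := if h : p (e.symm b) then some ⟨e.symm b, h⟩ else none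
  inv := by
    rintro ⟨a, ha⟩ ⟨b, hb⟩
    simp only [Option.dite_none_right_eq_some, Option.some_inj, Subtype.mk.injEq]
    constructor <;> rintro ⟨-, rfl⟩ <;> simpa

theorem Equiv.subtypePEquiv_apply_of_pos {α β : Type*} (e : α ≃ β) {p : α → Prop}
    {q : β → Prop} [DecidablePred p] [DecidablePred q] (a : {a // p a}) (h : q (e a)) :
    e.subtypePEquiv p q a = some ⟨e a, h⟩ :=
  dif_pos h

theorem Equiv.subtypePEquiv_apply_of_neg {α β : Type*} (e : α ≃ β) {p : α → Prop}
    {q : β → Prop} [DecidablePred p] [DecidablePred q] (a : {a // p a}) (h : ¬q (e a)) :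
    e.subtypePEquiv p q a = none :=
  dif_neg h

theorem eH_of_validH {N I J : ℤ} (h : validH (N, I, J)) :
    eH N I J = lp.single 2 (⟨(N, I, J), h⟩ : IdxH) 1 :=
  dif_pos h

theorem eH_of_not_validH {N I J : ℤ} (h : ¬validH (N, I, J)) : eH N I J = 0 :=
  dif_neg h

def translateIdx (v : ℤ × ℤ × ℤ) : IdxH ≃. IdxH :=
  (Equiv.addRight v).subtypePEquiv validH validH

theorem weightedShift_translateIdx_eH (v : ℤ × ℤ × ℤ) (c : lp (fun _ : IdxH => ℂ) ∞)
    {N I J : ℤ} (h : validH (N, I, J)) :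
    lp.weightedShift ENNReal.ofNat_ne_top (translateIdx v) c (eH N I J) =
      c ⟨(N, I, J), h⟩ • eH (N + v.1) (I + v.2.1) (J + v.2.2) := by
  rw [eH_of_validH h, lp.weightedShift_single]
  by_cases hv : validH (N + v.1, I + v.2.1, J + v.2.2)
  · rw [translateIdx, Equiv.subtypePEquiv_apply_of_pos _ _ hv, Option.elim_some,
      eH_of_validH hv, lp.single_smul]
    rfl
  · rw [translateIdx, Equiv.subtypePEquiv_apply_of_neg _ _ hv, eH_of_not_validH hv,
      smul_zero]
    rfl

def BoundedOnValid (f : ℤ → ℤ → ℤ → ℝ) : Prop :=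
  ∃ M, ∀ N I J, validH (N, I, J) → |f N I J| ≤ M

theorem BoundedOnValid.exists_clm_eH_eq {f : ℤ → ℤ → ℤ → ℝ} (hf : BoundedOnValid f)
    (a b c : ℤ) : ∃ T : Hsp →L[ℂ] Hsp, ∀ N I J, validH (N, I, J) →
      T (eH N I J) = (f N I J : ℂ) • eH (N + a) (I + b) (J + c) := by
  obtain ⟨M, hM⟩ := hf
  let w : lp (fun _ : IdxH => ℂ) ∞ := ⟨fun x => f x.1.1 x.1.2.1 x.1.2.2,
    memℓp_infty ⟨M, by rintro _ ⟨x, rfl⟩; simpa using hM _ _ _ x.2⟩⟩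
  exact ⟨lp.weightedShift ENNReal.ofNat_ne_top (translateIdx (a, b, c)) w,
    fun N I J h => weightedShift_translateIdx_eH (a, b, c) w h⟩

theorem BoundedOnValid.exists_clm_eH_eq_add {f g : ℤ → ℤ → ℤ → ℝ} (hf : BoundedOnValid f)
    (hg : BoundedOnValid g) (a b c a' b' c' : ℤ) :
    ∃ T : Hsp →L[ℂ] Hsp, ∀ N I J, validH (N, I, J) →
      T (eH N I J) = (f N I J : ℂ) • eH (N + a) (I + b) (J + c)
        + (g N I J : ℂ) • eH (N + a') (I + b') (J + c') := by
  obtain ⟨S, hS⟩ := hf.exists_clm_eH_eq a b c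
  obtain ⟨S', hS'⟩ := hg.exists_clm_eH_eq a' b' c'
  exact ⟨S + S', fun N I J h => by rw [add_apply, hS N I J h, hS' N I J h]⟩

theorem BoundedOnValid.mul {f g : ℤ → ℤ → ℤ → ℝ} (hf : BoundedOnValid f)
    (hg : BoundedOnValid g) : BoundedOnValid fun N I J => f N I J * g N I J := by
  obtain ⟨M, hM⟩ := hf
  obtain ⟨M', hM'⟩ := hg
  refine ⟨M * M', fun N I J h => ?_⟩
  rw [abs_mul]
  exact mul_le_mul (hM N I J h) (hM' N I J h) (abs_nonneg _) ((abs_nonneg _).trans (hM N I J h))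

section Coefficients

variable {q : ℝ} {N I J : ℤ}

theorem add_one_mul_pow_le_inv_one_sub (hq0 : 0 ≤ q) (hq1 : q < 1) (n : ℕ) :
    (n + 1) * q ^ n ≤ (1 - q)⁻¹ :=
  calc (n + 1) * q ^ n = ∑ _i ∈ Finset.range (n + 1), q ^ n := by
        rw [Finset.sum_const, Finset.card_range, nsmul_eq_mul]; push_cast; rfl
    _ ≤ ∑ i ∈ Finset.range (n + 1), q ^ i := Finset.sum_le_sum fun i hi =>
        pow_le_pow_of_le_one hq0 hq1.le (Finset.mem_range_succ_iff.1 hi)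
    _ ≤ (1 - q)⁻¹ := by
        have := geom_sum_Ico_le_of_lt_one (m := 0) (n := n + 1) hq0 hq1
        rwa [← Finset.range_eq_Ico, pow_zero, one_div] at this

theorem rpow_half_add_le_one (hq0 : 0 ≤ q) (hq1 : q ≤ 1) (h : validH (N, I, J)) :
    q ^ (((N : ℝ) + J) / 2) ≤ 1 := by
  have : -N ≤ J := (abs_le.1 h.2.2.1).1
  exact Real.rpow_le_one hq0 hq1 (by rify at this; linarith)

theorem abs_aC1_le (hq0 : 0 < q) (hq1 : q ≤ 1) (h : validH (N, I, J)) :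
    |aC1 q N I J| ≤ q ^ (((N : ℝ) + J) / 2) := by
  have : -N ≤ I := (abs_le.1 h.2.1).1
  rw [aC1, abs_of_nonneg (by positivity)]
  exact Real.rpow_le_rpow_of_exponent_ge hq0 hq1 (by rify at this; linarith)

theorem abs_bC1_le (hq0 : 0 ≤ q) (N I J : ℤ) : |bC1 q N I J| ≤ q ^ (((N : ℝ) + J) / 2) := by
  rw [bC1, abs_mul, abs_neg, abs_of_nonneg (by positivity), abs_of_nonneg (by positivity)]
  exact mul_le_of_le_one_right (by positivity)
    (Real.sqrt_le_one.2 (by linarith [Real.rpow_nonneg hq0 ((N : ℝ) + I + 2)]))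

theorem abs_aC2_le_one (hq0 : 0 ≤ q) (N I J : ℤ) : |aC2 q N I J| ≤ 1 := by
  rw [aC2, abs_of_nonneg (by positivity)]
  exact mul_le_one₀ (Real.sqrt_le_one.2 (by linarith [Real.rpow_nonneg hq0 ((N : ℝ) + I)]))
    (by positivity) (Real.sqrt_le_one.2 (by linarith [Real.rpow_nonneg hq0 ((N : ℝ) + J)]))

theorem abs_bC2_le_one (hq0 : 0 ≤ q) (hq1 : q ≤ 1) (h : validH (N, I, J)) :
    |bC2 q N I J| ≤ 1 := by
  have : -N ≤ I := (abs_le.1 h.2.1).1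
  rw [bC2, abs_of_nonneg (by positivity)]
  exact mul_le_one₀ (Real.rpow_le_one hq0 hq1 (by rify at this; linarith)) (by positivity)
    (Real.sqrt_le_one.2 (by linarith [Real.rpow_nonneg hq0 ((N : ℝ) + J)]))

theorem abs_lamD1_pred_sub (N I I' J : ℤ) : |lamD1 (N - 1) I' (J - 1) - lamD1 N I J| = 1 := by
  by_cases hJ : J = N <;> simp [lamD1, hJ]

theorem lamD2_sub_lamD2 (N I J N' I' J' : ℤ) : lamD2 N' I' J' - lamD2 N I J = N' - N := by
  simp [lamD2]

theorem abs_lamD1_succ_sub_mul_le (hq0 : 0 ≤ q) (hq1 : q < 1) (h : validH (N, I, J)) (I' : ℤ)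
    {c : ℝ} (hc : |c| ≤ q ^ (((N : ℝ) + J) / 2)) :
    |(lamD1 (N + 1) I' (J - 1) - lamD1 N I J) * c| ≤ 2 * (1 - q)⁻¹ := by
  have hJ1 : J - 1 ≠ N + 1 := by have := (le_abs_self J).trans h.2.2.1; omega
  by_cases hJ : J = N
  · subst hJ
    have hJ0 : 0 ≤ J := h.1
    lift J to ℕ using hJ0
    have hc' : |c| ≤ q ^ J := by simpa using hc
    have hdiff : lamD1 (J + 1) I' (J - 1) - lamD1 J I J = -(2 * ((J : ℝ) + 1)) := by
      simp [lamD1, hJ1]; ring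
    rw [hdiff, abs_mul, abs_neg, abs_of_nonneg (by positivity), mul_assoc]
    gcongr
    calc ((J : ℝ) + 1) * |c| ≤ (J + 1) * q ^ J := by gcongr
      _ ≤ (1 - q)⁻¹ := add_one_mul_pow_le_inv_one_sub hq0 hq1 J
  · have hdiff : lamD1 (N + 1) I' (J - 1) - lamD1 N I J = -1 := by
      simp [lamD1, hJ1, hJ]
    rw [hdiff, abs_mul, abs_neg, abs_one, one_mul]
    calc |c| ≤ 1 := hc.trans (rpow_half_add_le_one hq0 hq1.le h)
      _ ≤ (1 - q)⁻¹ := by simpa using add_one_mul_pow_le_inv_one_sub hq0 hq1 0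
      _ ≤ 2 * (1 - q)⁻¹ := by linarith [inv_pos.2 (sub_pos.2 hq1)]

theorem boundedOnValid_aC1 (hq0 : 0 < q) (hq1 : q ≤ 1) : BoundedOnValid (aC1 q) :=
  ⟨1, fun _ _ _ h => (abs_aC1_le hq0 hq1 h).trans (rpow_half_add_le_one hq0.le hq1 h)⟩

theorem boundedOnValid_aC2 (hq0 : 0 ≤ q) : BoundedOnValid (aC2 q) :=
  ⟨1, fun N I J _ => abs_aC2_le_one hq0 N I J⟩

theorem boundedOnValid_bC1 (hq0 : 0 ≤ q) (hq1 : q ≤ 1) : BoundedOnValid (bC1 q) :=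
  ⟨1, fun N I J h => (abs_bC1_le hq0 N I J).trans (rpow_half_add_le_one hq0 hq1 h)⟩

theorem boundedOnValid_bC2 (hq0 : 0 ≤ q) (hq1 : q ≤ 1) : BoundedOnValid (bC2 q) :=
  ⟨1, fun _ _ _ h => abs_bC2_le_one hq0 hq1 h⟩

theorem boundedOnValid_lamD1_pred_sub (b : ℤ) :
    BoundedOnValid fun N I J => lamD1 (N - 1) (I + b) (J - 1) - lamD1 N I J :=
  ⟨1, fun N I J _ => (abs_lamD1_pred_sub N I (I + b) J).le⟩

theorem boundedOnValid_lamD2_sub (a b c : ℤ) :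
    BoundedOnValid fun N I J => lamD2 (N + a) (I + b) (J + c) - lamD2 N I J :=
  ⟨|a|, fun N I J _ => by simp [lamD2_sub_lamD2]⟩

theorem boundedOnValid_lamD1_succ_sub_mul (hq0 : 0 ≤ q) (hq1 : q < 1)
    {c : ℤ → ℤ → ℤ → ℝ} (hc : ∀ N I J, validH (N, I, J) → |c N I J| ≤ q ^ (((N : ℝ) + J) / 2))
    (b : ℤ) :
    BoundedOnValid fun N I J => (lamD1 (N + 1) (I + b) (J - 1) - lamD1 N I J) * c N I J :=
  ⟨2 * (1 - q)⁻¹, fun N I J h => abs_lamD1_succ_sub_mul_le hq0 hq1 h (I + b) (hc N I J h)⟩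

end Coefficients

/-- Each of the commutators `[D₁, α̂]`, `[D₁, β̂]`, `[|D₂|, α̂]`, `[|D₂|, β̂]`,
defined on the algebraic span of the basis vectors of `H`, extends to a bounded operator on
`H`. -/
theorem commutators_D1_absD2_bounded (q : ℝ) (hq0 : 0 < q) (hq1 : q < 1) :
    ∃ T₁ T₂ T₃ T₄ : Hsp →L[ℂ] Hsp, ∀ N I J : ℤ, validH (N, I, J) →
      T₁ (eH N I J) =
          (((lamD1 (N+1) (I-1) (J-1) - lamD1 N I J) * aC1 q N I J : ℝ) : ℂ) •
              eH (N+1) (I-1) (J-1)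
            + (((lamD1 (N-1) (I-1) (J-1) - lamD1 N I J) * aC2 q N I J : ℝ) : ℂ) •
              eH (N-1) (I-1) (J-1) ∧
      T₂ (eH N I J) =
          (((lamD1 (N+1) (I+1) (J-1) - lamD1 N I J) * bC1 q N I J : ℝ) : ℂ) •
              eH (N+1) (I+1) (J-1)
            + (((lamD1 (N-1) (I+1) (J-1) - lamD1 N I J) * bC2 q N I J : ℝ) : ℂ) •
              eH (N-1) (I+1) (J-1) ∧
      T₃ (eH N I J) =
          (((lamD2 (N+1) (I-1) (J-1) - lamD2 N I J) * aC1 q N I J : ℝ) : ℂ) •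
              eH (N+1) (I-1) (J-1)
            + (((lamD2 (N-1) (I-1) (J-1) - lamD2 N I J) * aC2 q N I J : ℝ) : ℂ) •
              eH (N-1) (I-1) (J-1) ∧
      T₄ (eH N I J) =
          (((lamD2 (N+1) (I+1) (J-1) - lamD2 N I J) * bC1 q N I J : ℝ) : ℂ) •
              eH (N+1) (I+1) (J-1)
            + (((lamD2 (N-1) (I+1) (J-1) - lamD2 N I J) * bC2 q N I J : ℝ) : ℂ) •
              eH (N-1) (I+1) (J-1) := by
  obtain ⟨T₁, hT₁⟩ := (boundedOnValid_lamD1_succ_sub_mul hq0.le hq1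
      (fun _ _ _ h => abs_aC1_le hq0 hq1.le h) (-1)).exists_clm_eH_eq_add
    ((boundedOnValid_lamD1_pred_sub (-1)).mul (boundedOnValid_aC2 hq0.le))
    1 (-1) (-1) (-1) (-1) (-1)
  obtain ⟨T₂, hT₂⟩ := (boundedOnValid_lamD1_succ_sub_mul hq0.le hq1
      (fun N I J _ => abs_bC1_le hq0.le N I J) 1).exists_clm_eH_eq_add
    ((boundedOnValid_lamD1_pred_sub 1).mul (boundedOnValid_bC2 hq0.le hq1.le))
    1 1 (-1) (-1) 1 (-1)
  obtain ⟨T₃, hT₃⟩ := ((boundedOnValid_lamD2_sub 1 (-1) (-1)).mul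
      (boundedOnValid_aC1 hq0 hq1.le)).exists_clm_eH_eq_add
    ((boundedOnValid_lamD2_sub (-1) (-1) (-1)).mul (boundedOnValid_aC2 hq0.le))
    1 (-1) (-1) (-1) (-1) (-1)
  obtain ⟨T₄, hT₄⟩ := ((boundedOnValid_lamD2_sub 1 1 (-1)).mul
      (boundedOnValid_bC1 hq0.le hq1.le)).exists_clm_eH_eq_add
    ((boundedOnValid_lamD2_sub (-1) 1 (-1)).mul (boundedOnValid_bC2 hq0.le hq1.le))
    1 1 (-1) (-1) 1 (-1)
  simp only [sub_eq_add_neg] at hT₁ hT₂ hT₃ hT₄ ⊢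
  exact ⟨T₁, T₂, T₃, T₄, fun N I J h => ⟨hT₁ N I J h, hT₂ N I J h, hT₃ N I J h, hT₄ N I J h⟩⟩
end
end

section
/- Let λ(n,i,j) denote the eigenvalue of D₁ on the basis vector e^(n)_{ij}, i.e. λ(n,i,j) = −2n if j ≠ n and λ(n,i,n) = 2n+1. Then for a real number s > 0, the family ((1 + λ(n,i,j)²)^{−s/2}) indexed by the basis of H is summable if and only if s > 3. (In particular, D₁ has compact resolvent and the corresponding spectral triple is 3⁺-summable.) -/
noncomputable section

open Real

/-- Parametrization of the index set. -/
def idxFun : (Σ n : ℕ, Fin (n + 1) × Fin (n + 1)) → IdxH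
  | ⟨n, k, l⟩ => ⟨((n : ℤ), -(n : ℤ) + 2 * ((k : ℕ) : ℤ), -(n : ℤ) + 2 * ((l : ℕ) : ℤ)), by
      have hk := k.isLt
      have hl := l.isLt
      refine ⟨by positivity, ?_, ?_, ?_, ?_⟩ <;> simp only [abs_le] <;> omega⟩

lemma idxFun_bij : Function.Bijective idxFun := by
  constructor
  · rintro ⟨n, k, l⟩ ⟨m, k', l'⟩ h
    simp only [idxFun, Subtype.mk.injEq, Prod.mk.injEq] at h
    obtain ⟨h1, h2, h3⟩ := h
    have hnm : n = m := by exact_mod_cast h1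
    subst hnm
    exact congrArg (Sigma.mk n) (by
      simp only [Prod.mk.injEq]
      exact ⟨Fin.ext (by omega), Fin.ext (by omega)⟩)
  · rintro ⟨⟨N, I, J⟩, h0, h1, h2, h3, h4⟩
    dsimp only at h0 h1 h2 h3 h4
    rw [abs_le] at h1 h2
    refine ⟨⟨N.toNat, ⟨((I + N) / 2).toNat, by omega⟩, ⟨((J + N) / 2).toNat, by omega⟩⟩, ?_⟩
    simp only [idxFun, Subtype.mk.injEq, Prod.mk.injEq]
    refine ⟨by omega, by omega, by omega⟩

/-- For `s > 0`, the family `((1 + λ(n,i,j)²)^(-s/2))`, indexed by the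
orthonormal basis of `H`, is summable if and only if `s > 3`; here `λ(n,i,j)` is the eigenvalue
of `D₁` on `e^(n)_{ij}`. In particular `D₁` has compact resolvent and the corresponding spectral
triple is `3⁺`-summable. -/
theorem D1_summability (s : ℝ) (hs : 0 < s) :
    Summable (fun x : IdxH => (1 + lamD1 x.1.1 x.1.2.1 x.1.2.2 ^ 2) ^ (-s / 2)) ↔ 3 < s := by
  set f : IdxH → ℝ := fun x => (1 + lamD1 x.1.1 x.1.2.1 x.1.2.2 ^ 2) ^ (-s / 2) with hf
  have hfnn : ∀ x, 0 ≤ f x := by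
    intro x
    apply Real.rpow_nonneg
    have := sq_nonneg (lamD1 x.1.1 x.1.2.1 x.1.2.2)
    linarith
  rw [← Equiv.summable_iff (Equiv.ofBijective idxFun idxFun_bij)]
  have hcomp : (f ∘ ⇑(Equiv.ofBijective idxFun idxFun_bij))
      = fun x : (Σ n : ℕ, Fin (n + 1) × Fin (n + 1)) => f (idxFun x) := rfl
  rw [hcomp, summable_sigma_of_nonneg
    (fun x : (Σ n : ℕ, Fin (n + 1) × Fin (n + 1)) => hfnn (idxFun x))]
  have hexp : -s / 2 ≤ 0 := by linarith
  -- termwise bounds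
  have hbound : ∀ (n : ℕ) (p : Fin (n + 1) × Fin (n + 1)),
      (1 + ((n : ℝ) + 1) ^ 2) ^ (-s / 2) ≤ f (idxFun ⟨n, p⟩) ∧
      f (idxFun ⟨n, p⟩) ≤ (1 + (n : ℝ) ^ 2) ^ (-s / 2) := by
    rintro n ⟨k, l⟩
    have hn0 : (0 : ℝ) ≤ (n : ℝ) := n.cast_nonneg
    simp only [hf, idxFun, lamD1]
    split_ifs with h
    · push_cast
      constructor
      · apply Real.rpow_le_rpow_of_nonpos (by positivity) (le_refl _) hexp
      · apply Real.rpow_le_rpow_of_nonpos (by positivity) (by nlinarith) hexp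
    · push_cast
      constructor
      · apply Real.rpow_le_rpow_of_nonpos (by positivity) (by nlinarith) hexp
      · apply Real.rpow_le_rpow_of_nonpos (by positivity) (by nlinarith) hexp
  set S : ℕ → ℝ := fun n => ∑' p : Fin (n + 1) × Fin (n + 1), f (idxFun ⟨n, p⟩) with hS
  have hScard : ∀ n : ℕ, (Fintype.card (Fin (n + 1) × Fin (n + 1)) : ℝ) = ((n : ℝ) + 1) ^ 2 := by
    intro n
    simp [Fintype.card_prod]
    ring
  have hSval : ∀ n : ℕ, S n = ∑ p : Fin (n + 1) × Fin (n + 1), f (idxFun ⟨n, p⟩) :=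
    fun n => tsum_fintype _
  have hSub : ∀ n : ℕ, S n ≤ ((n : ℝ) + 1) ^ 2 * (1 + (n : ℝ) ^ 2) ^ (-s / 2) := by
    intro n
    rw [hSval]
    calc ∑ p : Fin (n + 1) × Fin (n + 1), f (idxFun ⟨n, p⟩)
        ≤ Finset.univ.card • ((1 + (n : ℝ) ^ 2) ^ (-s / 2)) :=
          Finset.sum_le_card_nsmul _ _ _ (fun p _ => (hbound n p).2)
      _ = ((n : ℝ) + 1) ^ 2 * (1 + (n : ℝ) ^ 2) ^ (-s / 2) := by
          rw [nsmul_eq_mul, Finset.card_univ, hScard]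
  have hSlb : ∀ n : ℕ, ((n : ℝ) + 1) ^ 2 * (1 + ((n : ℝ) + 1) ^ 2) ^ (-s / 2) ≤ S n := by
    intro n
    rw [hSval]
    calc ((n : ℝ) + 1) ^ 2 * (1 + ((n : ℝ) + 1) ^ 2) ^ (-s / 2)
        = Finset.univ.card • ((1 + ((n : ℝ) + 1) ^ 2) ^ (-s / 2)) := by
          rw [nsmul_eq_mul, Finset.card_univ, hScard]
      _ ≤ ∑ p : Fin (n + 1) × Fin (n + 1), f (idxFun ⟨n, p⟩) :=
          Finset.card_nsmul_le_sum _ _ _ (fun p _ => (hbound n p).1)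
  -- comparison with (n+1)^(2-s)
  set P : ℕ → ℝ := fun n => ((n : ℝ) + 1) ^ (2 - s) with hP
  have hx1 : ∀ n : ℕ, (1 : ℝ) ≤ (n : ℝ) + 1 := by
    intro n; have : (0:ℝ) ≤ (n:ℝ) := n.cast_nonneg; linarith
  have hxpow : ∀ n : ℕ, ((n : ℝ) + 1) ^ 2 * (((n : ℝ) + 1) ^ 2 : ℝ) ^ (-s / 2) = P n := by
    intro n
    have hx0 : (0 : ℝ) < (n : ℝ) + 1 := lt_of_lt_of_le one_pos (hx1 n)
    rw [← Real.rpow_natCast ((n : ℝ) + 1) 2, ← Real.rpow_mul hx0.le, ← Real.rpow_add hx0, hP]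
    norm_num
    ring_nf
  have hub2 : ∀ n : ℕ, ((n : ℝ) + 1) ^ 2 * (1 + (n : ℝ) ^ 2) ^ (-s / 2)
      ≤ 2 ^ (s / 2) * P n := by
    intro n
    have hx0 : (0 : ℝ) < (n : ℝ) + 1 := lt_of_lt_of_le one_pos (hx1 n)
    have h1 : (((n : ℝ) + 1) ^ 2) / 2 ≤ 1 + (n : ℝ) ^ 2 := by nlinarith [sq_nonneg ((n : ℝ) - 1)]
    have h2 : (1 + (n : ℝ) ^ 2) ^ (-s / 2) ≤ ((((n : ℝ) + 1) ^ 2) / 2) ^ (-s / 2) :=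
      Real.rpow_le_rpow_of_nonpos (by positivity) h1 hexp
    have h3 : ((((n : ℝ) + 1) ^ 2) / 2) ^ (-s / 2)
        = 2 ^ (s / 2) * (((n : ℝ) + 1) ^ 2 : ℝ) ^ (-s / 2) := by
      rw [Real.div_rpow (by positivity) (by norm_num)]
      rw [div_eq_mul_inv, ← Real.rpow_neg (by norm_num : (0:ℝ) ≤ 2)]
      ring_nf
    calc ((n : ℝ) + 1) ^ 2 * (1 + (n : ℝ) ^ 2) ^ (-s / 2)
        ≤ ((n : ℝ) + 1) ^ 2 * (((((n : ℝ) + 1) ^ 2) / 2) ^ (-s / 2)) := by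
          apply mul_le_mul_of_nonneg_left h2 (by positivity)
      _ = 2 ^ (s / 2) * (((n : ℝ) + 1) ^ 2 * (((n : ℝ) + 1) ^ 2 : ℝ) ^ (-s / 2)) := by
          rw [h3]; ring
      _ = 2 ^ (s / 2) * P n := by rw [hxpow n]
  have hlb2 : ∀ n : ℕ, 2 ^ (-s / 2) * P n
      ≤ ((n : ℝ) + 1) ^ 2 * (1 + ((n : ℝ) + 1) ^ 2) ^ (-s / 2) := by
    intro n
    have hx0 : (0 : ℝ) < (n : ℝ) + 1 := lt_of_lt_of_le one_pos (hx1 n)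
    have h1 : 1 + ((n : ℝ) + 1) ^ 2 ≤ 2 * (((n : ℝ) + 1) ^ 2) := by nlinarith [hx1 n]
    have h2 : (2 * (((n : ℝ) + 1) ^ 2)) ^ (-s / 2) ≤ (1 + ((n : ℝ) + 1) ^ 2) ^ (-s / 2) :=
      Real.rpow_le_rpow_of_nonpos (by positivity) h1 hexp
    have h3 : (2 * (((n : ℝ) + 1) ^ 2)) ^ (-s / 2)
        = 2 ^ (-s / 2) * (((n : ℝ) + 1) ^ 2 : ℝ) ^ (-s / 2) :=
      Real.mul_rpow (by norm_num) (by positivity)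
    calc 2 ^ (-s / 2) * P n
        = ((n : ℝ) + 1) ^ 2 * ((2 * (((n : ℝ) + 1) ^ 2)) ^ (-s / 2)) := by
          rw [h3, ← hxpow n]; ring
      _ ≤ ((n : ℝ) + 1) ^ 2 * (1 + ((n : ℝ) + 1) ^ 2) ^ (-s / 2) := by
          apply mul_le_mul_of_nonneg_left h2 (by positivity)
  have hPsum : Summable P ↔ 3 < s := by
    have h1 := summable_nat_add_iff (f := fun m : ℕ => (m : ℝ) ^ (2 - s)) 1
    rw [Real.summable_nat_rpow] at h1
    have h2 : Summable P ↔ 2 - s < -1 := by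
      refine Iff.trans ?_ h1
      refine summable_congr fun n => ?_
      show ((n : ℝ) + 1) ^ (2 - s) = ((n + 1 : ℕ) : ℝ) ^ (2 - s)
      push_cast
      ring_nf
    rw [h2]
    constructor <;> intro h <;> linarith
  have hSnn : ∀ n, 0 ≤ S n := fun n => tsum_nonneg (fun p => hfnn _)
  constructor
  · rintro ⟨-, hsum⟩
    rw [← hPsum]
    have h2 : Summable (fun n => 2 ^ (-s / 2) * P n) :=
      hsum.of_nonneg_of_le (fun n => by positivity) (fun n => (hlb2 n).trans (hSlb n))
    exact (summable_mul_left_iff (by positivity : (0:ℝ) < 2 ^ (-s/2)).ne').mp h2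
  · intro h
    refine ⟨fun n => Summable.of_finite, ?_⟩
    have hPs : Summable (fun n => 2 ^ (s / 2) * P n) := (hPsum.mpr h).mul_left _
    exact hPs.of_nonneg_of_le hSnn (fun n => (hSub n).trans (hub2 n))
end
end

section
/- Let μ denote the eigenvalue function of D on the basis of 𝓗, i.e. μ = 2n+1 on u^n_{ij} and μ = −2n on d^n_{ij}. Then for a real number s > 0, the family ((1 + μ²)^{−s/2}) indexed by the basis of 𝓗 is summable if and only if s > 3. -/
noncomputable section

open Real

/-- Validity of an index triple `(N, I, J)` (with `n = N/2`, `i = I/2`, `j = J/2`) for the basis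
vectors `u^n_{ij}` of `𝓗`: `n ∈ ½ℤ₊`, `i ∈ {-n, …, n}`, `j ∈ {-n-1/2, …, n+1/2}`. -/
abbrev validU (x : ℤ × ℤ × ℤ) : Prop :=
  0 ≤ x.1 ∧ |x.2.1| ≤ x.1 ∧ (x.1 + x.2.1) % 2 = 0 ∧
    |x.2.2| ≤ x.1 + 1 ∧ (x.1 + 1 + x.2.2) % 2 = 0

/-- Validity of an index triple `(N, I, J)` (with `n = N/2`, `i = I/2`, `j = J/2`) for the basis
vectors `d^n_{ij}` of `𝓗`: `n ≥ 1/2`, `i ∈ {-n, …, n}`, `j ∈ {-n+1/2, …, n-1/2}`. -/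
abbrev validD (x : ℤ × ℤ × ℤ) : Prop :=
  1 ≤ x.1 ∧ |x.2.1| ≤ x.1 ∧ (x.1 + x.2.1) % 2 = 0 ∧
    |x.2.2| ≤ x.1 - 1 ∧ (x.1 + 1 + x.2.2) % 2 = 0

abbrev IdxW : Type := {x : ℤ × ℤ × ℤ // validU x} ⊕ {x : ℤ × ℤ × ℤ // validD x}

/-- The Hilbert space `𝓗` with orthonormal basis `{u^n_{ij}} ∪ {d^n_{ij}}`. -/
abbrev Wsp : Type := lp (fun _ : IdxW => ℂ) 2

/-- The basis vector `u^n_{ij}` of `𝓗` (zero if out of range). -/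
def eU (N I J : ℤ) : Wsp :=
  if h : validU (N, I, J) then lp.single 2 (Sum.inl ⟨(N, I, J), h⟩ : IdxW) (1 : ℂ) else 0

/-- The basis vector `d^n_{ij}` of `𝓗` (zero if out of range, in particular for
`j = ±(n+1/2)`). -/
def eD (N I J : ℤ) : Wsp :=
  if h : validD (N, I, J) then lp.single 2 (Sum.inr ⟨(N, I, J), h⟩ : IdxW) (1 : ℂ) else 0

/-- the eigenvalue of `D` on a basis vector of `𝓗`: `D u^n_{ij} = (2n+1) u^n_{ij}` and
`D d^n_{ij} = -2n d^n_{ij}` (here `n = N/2`) -/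
def muW : IdxW → ℝ :=
  Sum.elim (fun u => (u.1.1 : ℝ) + 1) (fun d => -(d.1.1 : ℝ))

/-!
The summand depends only on `|μ| ∈ ℕ`, and the level set `{|μ| = k}` is finite with between `k²`
and `2(2k+1)²` elements. Summing over level sets, the series is therefore comparable to
`∑ k² (1 + k²)^(-s/2)`, hence to `∑ k^(2-s)`, which converges if and only if `s > 3`.
-/

theorem summable_comp_iff_summable_card_fiber_mul {ι β : Type*} (g : ι → β)
    [∀ b, Finite {x // g x = b}] {a : β → ℝ} (ha : ∀ b, 0 ≤ a b) :
    Summable (fun x => a (g x)) ↔ Summable (fun b => Nat.card {x // g x = b} * a b) := by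
  rw [← (Equiv.sigmaFiberEquiv g).summable_iff, Function.comp_def,
    summable_sigma_of_nonneg fun y => ha (g (Equiv.sigmaFiberEquiv g y))]
  have hfiber (b : β) : ∑' y : {x // g x = b}, a (g y) = Nat.card {x // g x = b} * a b := by
    rw [tsum_congr fun y => congrArg a y.2, tsum_const, nsmul_eq_mul]
  simp only [Equiv.sigmaFiberEquiv_apply, Summable.of_finite, implies_true, true_and, hfiber]

theorem summable_iff_of_const_mul_le_of_le_const_mul {ι : Type*} {f g : ι → ℝ} {c C : ℝ}
    (hc : 0 < c) (hg : ∀ i, 0 ≤ g i) (hlow : ∀ i, c * g i ≤ f i) (hup : ∀ i, f i ≤ C * g i) :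
    Summable f ↔ Summable g := by
  refine ⟨fun hf => ?_, fun hg' => ?_⟩
  · exact (summable_mul_left_iff hc.ne').mp
      (hf.of_nonneg_of_le (fun i => mul_nonneg hc.le (hg i)) hlow)
  · exact (hg'.mul_left C).of_nonneg_of_le (fun i => (mul_nonneg hc.le (hg i)).trans (hlow i)) hup

theorem summable_nat_add_one_rpow_iff {p : ℝ} :
    Summable (fun k : ℕ => ((k : ℝ) + 1) ^ p) ↔ p < -1 := by
  simpa using (summable_nat_add_iff 1).trans (Real.summable_nat_rpow (p := p))

theorem sq_rpow_neg_half {x : ℝ} (hx : 0 ≤ x) (s : ℝ) : (x ^ 2) ^ (-s / 2) = x ^ (-s) := by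
  rw [← Real.rpow_natCast_mul hx]
  ring_nf

theorem rpow_two_sub {x : ℝ} (hx : 0 < x) (s : ℝ) : x ^ (2 - s) = x ^ 2 * x ^ (-s) := by
  rw [sub_eq_add_neg, Real.rpow_add hx, Real.rpow_two]

theorem one_add_sq_rpow_neg_half_le {x s : ℝ} (hx : 0 < x) (hs : 0 ≤ s) :
    (1 + x ^ 2) ^ (-s / 2) ≤ x ^ (-s) := by
  rw [← sq_rpow_neg_half hx.le]
  exact Real.rpow_le_rpow_of_nonpos (by positivity) (by linarith) (by linarith)

theorem two_rpow_neg_half_mul_le_one_add_sq_rpow {x s : ℝ} (hx : 1 ≤ x) (hs : 0 ≤ s) :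
    2 ^ (-s / 2) * x ^ (-s) ≤ (1 + x ^ 2) ^ (-s / 2) := by
  rw [← sq_rpow_neg_half (by linarith), ← Real.mul_rpow zero_le_two (by positivity)]
  exact Real.rpow_le_rpow_of_nonpos (by positivity) (by nlinarith) (by linarith)

def muWNatAbs : IdxW → ℕ :=
  Sum.elim (fun u => (u.1.1 + 1).toNat) (fun d => d.1.1.toNat)

theorem muW_sq (x : IdxW) : muW x ^ 2 = (muWNatAbs x : ℝ) ^ 2 := by
  rcases x with ⟨⟨N, I, J⟩, hN, -⟩ | ⟨⟨N, I, J⟩, hN, -⟩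
  · have hcast : (((N + 1).toNat : ℕ) : ℝ) = (N : ℝ) + 1 := by
      exact_mod_cast Int.toNat_of_nonneg (by omega)
    simp [muW, muWNatAbs, hcast]
  · have hcast : ((N.toNat : ℕ) : ℝ) = (N : ℝ) := by
      exact_mod_cast Int.toNat_of_nonneg (by omega)
    simp [muW, muWNatAbs, hcast]

-- Forgets `N`, which is determined by `|μ|` and the type (`u` or `d`) of the vector.
def sideIJ : IdxW → Bool × ℤ × ℤ :=
  Sum.elim (fun u => (false, u.1.2)) (fun d => (true, d.1.2))

def sideIJBox (k : ℕ) : Finset (Bool × ℤ × ℤ) :=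
  Finset.univ ×ˢ Finset.Icc (-(k : ℤ)) k ×ˢ Finset.Icc (-(k : ℤ)) k

theorem card_sideIJBox (k : ℕ) : (sideIJBox k).card = 2 * (2 * k + 1) ^ 2 := by
  simp only [sideIJBox, Finset.card_product, Finset.card_univ, Fintype.card_bool, Int.card_Icc,
    show (k : ℤ) + 1 - -k = (2 * k + 1 : ℕ) by push_cast; ring, Int.toNat_natCast]
  ring

theorem sideIJ_mem_sideIJBox (x : IdxW) : sideIJ x ∈ sideIJBox (muWNatAbs x) := by
  rcases x with ⟨⟨N, I, J⟩, hx⟩ | ⟨⟨N, I, J⟩, hx⟩ <;>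
  · simp only [validU, validD, abs_le] at hx
    simp only [sideIJ, sideIJBox, muWNatAbs, Sum.elim_inl, Sum.elim_inr, Finset.mem_product,
      Finset.mem_univ, Finset.mem_Icc, true_and]
    omega

theorem eq_of_muWNatAbs_eq_of_sideIJ_eq (x y : IdxW) :
    muWNatAbs x = muWNatAbs y → sideIJ x = sideIJ y → x = y := by
  rcases x with ⟨⟨N, I, J⟩, hx⟩ | ⟨⟨N, I, J⟩, hx⟩ <;>
  rcases y with ⟨⟨N', I', J'⟩, hy⟩ | ⟨⟨N', I', J'⟩, hy⟩ <;>
  simp only [validU, validD] at hx hy <;>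
  simp only [sideIJ, muWNatAbs, Sum.elim_inl, Sum.elim_inr, Prod.mk.injEq, reduceCtorEq,
    false_and, imp_self, implies_true, Sum.inl.injEq, Sum.inr.injEq, Subtype.mk.injEq] <;>
  omega

def fiberToSideIJBox (k : ℕ) (x : {x : IdxW // muWNatAbs x = k}) : sideIJBox k :=
  ⟨sideIJ x, by simpa only [x.2] using sideIJ_mem_sideIJBox x.1⟩

theorem fiberToSideIJBox_injective (k : ℕ) : Function.Injective (fiberToSideIJBox k) :=
  fun x y h => Subtype.ext <|
    eq_of_muWNatAbs_eq_of_sideIJ_eq x y (x.2.trans y.2.symm) (congrArg Subtype.val h)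

instance (k : ℕ) : Finite {x : IdxW // muWNatAbs x = k} :=
  Finite.of_injective _ (fiberToSideIJBox_injective k)

theorem card_muWNatAbs_fiber_le (k : ℕ) :
    Nat.card {x : IdxW // muWNatAbs x = k} ≤ 2 * (2 * k + 1) ^ 2 := by
  simpa [card_sideIJBox] using Nat.card_le_card_of_injective _ (fiberToSideIJBox_injective k)

def uIndexOfFinPair (k : ℕ) (ab : Fin (k + 1) × Fin (k + 1)) :
    {x : IdxW // muWNatAbs x = k + 1} :=
  ⟨Sum.inl ⟨(k, 2 * ab.1 - k, 2 * ab.2 - k - 1), by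
    simp only [validU, abs_le]; omega⟩, by simp only [muWNatAbs, Sum.elim_inl]; omega⟩

theorem uIndexOfFinPair_injective (k : ℕ) : Function.Injective (uIndexOfFinPair k) := by
  rintro ⟨a, b⟩ ⟨a', b'⟩ h
  obtain ⟨ha, hb⟩ : (a : ℕ) = a' ∧ (b : ℕ) = b' := by simpa [uIndexOfFinPair] using h
  exact Prod.ext (Fin.ext ha) (Fin.ext hb)

theorem le_card_muWNatAbs_fiber (k : ℕ) :
    (k + 1) ^ 2 ≤ Nat.card {x : IdxW // muWNatAbs x = k + 1} := by
  simpa [sq] using Nat.card_le_card_of_injective _ (uIndexOfFinPair_injective k)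

section

variable {s : ℝ}

theorem le_card_muWNatAbs_fiber_mul (hs : 0 ≤ s) (k : ℕ) :
    2 ^ (-s / 2) * ((k : ℝ) + 1) ^ (2 - s) ≤
      Nat.card {x : IdxW // muWNatAbs x = k + 1} * (1 + ((k + 1 : ℕ) : ℝ) ^ 2) ^ (-s / 2) := by
  have hcard : ((k : ℝ) + 1) ^ 2 ≤ Nat.card {x : IdxW // muWNatAbs x = k + 1} := by
    exact_mod_cast le_card_muWNatAbs_fiber k
  have hterm := two_rpow_neg_half_mul_le_one_add_sq_rpow (x := (k : ℝ) + 1) (by simp) hs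
  rw [rpow_two_sub (by positivity), Nat.cast_succ, mul_left_comm]
  gcongr

theorem card_muWNatAbs_fiber_mul_le (hs : 0 ≤ s) (k : ℕ) :
    Nat.card {x : IdxW // muWNatAbs x = k + 1} * (1 + ((k + 1 : ℕ) : ℝ) ^ 2) ^ (-s / 2) ≤
      18 * ((k : ℝ) + 1) ^ (2 - s) := by
  have hcard : (Nat.card {x : IdxW // muWNatAbs x = k + 1} : ℝ) ≤ 18 * ((k : ℝ) + 1) ^ 2 := by
    calc (Nat.card {x : IdxW // muWNatAbs x = k + 1} : ℝ) ≤ 2 * (2 * ((k : ℝ) + 1) + 1) ^ 2 := by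
          exact_mod_cast card_muWNatAbs_fiber_le (k + 1)
      _ ≤ 18 * ((k : ℝ) + 1) ^ 2 := by nlinarith [k.cast_nonneg (α := ℝ)]
  have hterm := one_add_sq_rpow_neg_half_le (x := (k : ℝ) + 1) (by positivity) hs
  rw [rpow_two_sub (by positivity), Nat.cast_succ, ← mul_assoc]
  gcongr

end

/-- For `s > 0`, the family `((1 + μ²)^(-s/2))`, indexed by the orthonormal
basis of `𝓗`, is summable if and only if `s > 3`; here `μ` is the eigenvalue function of `D`. -/
theorem D_summability (s : ℝ) (hs : 0 < s) :
    Summable (fun x : IdxW => (1 + muW x ^ 2) ^ (-s / 2)) ↔ 3 < s := by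
  simp only [muW_sq]
  rw [summable_comp_iff_summable_card_fiber_mul muWNatAbs
      (a := fun k : ℕ => (1 + (k : ℝ) ^ 2) ^ (-s / 2)) (fun k => by positivity),
    ← summable_nat_add_iff 1,
    summable_iff_of_const_mul_le_of_le_const_mul (by positivity) (fun k => by positivity)
      (le_card_muWNatAbs_fiber_mul hs.le) (card_muWNatAbs_fiber_mul_le hs.le),
    summable_nat_add_one_rpow_iff]
  constructor <;> intro h <;> linarith
end
end
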